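/- arXiv:2104.05202 — 7 statements merged into one kernel-verified Lean document; each statement's English description precedes it below -/
import Mathlib

section
/- (Implicit Duality Theorem) Let S, P, Q be pairwise disjoint finite sets and let V_SP ⊆ ℂ^{S⊎P} and V_PQ ⊆ ℂ^{P⊎Q} be ℂ-linear subspaces. Then (V_SP ↔ V_PQ)^⊥ = V_SP^⊥ ⇌ V_PQ^⊥, where the orthogonal complement on the left is taken in ℂ^{S⊎Q}, and on the right in ℂ^{S⊎P} and ℂ^{P⊎Q} respectively. -/
/-!
STATEMENT 4 (Implicit Duality Theorem): Let S, P, Q be pairwise disjoint finite sets and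
let V_SP ⊆ ℂ^{S⊎P} and V_PQ ⊆ ℂ^{P⊎Q} be ℂ-linear subspaces. Then
(V_SP ↔ V_PQ)^⊥ = V_SP^⊥ ⇌ V_PQ^⊥, the orthogonal complements being taken with
respect to the Hermitian inner products on ℂ^{S⊎Q}, ℂ^{S⊎P}, ℂ^{P⊎Q}.
-/

/-- Hermitian inner product on `ℂ^X`: `⟨f,g⟩ = Σ_e f e * conj (g e)`. -/
noncomputable def hinner {X : Type*} [Fintype X] (f g : X → ℂ) : ℂ :=
  ∑ e, f e * (starRingEnd ℂ) (g e)

/-- Orthogonal complement (as a set) in `ℂ^{X⊎Y} = ℂ^X × ℂ^Y`. -/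
def pperp {X Y : Type*} [Fintype X] [Fintype Y] (K : Set ((X → ℂ) × (Y → ℂ))) :
    Set ((X → ℂ) × (Y → ℂ)) :=
  {g | ∀ f ∈ K, hinner f.1 g.1 + hinner f.2 g.2 = 0}

/-- Matched composition `K_SP ↔ K_PQ`. -/
def matched {S P Q : Type*} (KSP : Set ((S → ℂ) × (P → ℂ)))
    (KPQ : Set ((P → ℂ) × (Q → ℂ))) : Set ((S → ℂ) × (Q → ℂ)) :=
  {fg | ∃ h : P → ℂ, (fg.1, h) ∈ KSP ∧ (h, fg.2) ∈ KPQ}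

/-- Skewed composition `K_SP ⇌ K_PQ`. -/
def skewed {S P Q : Type*} (KSP : Set ((S → ℂ) × (P → ℂ)))
    (KPQ : Set ((P → ℂ) × (Q → ℂ))) : Set ((S → ℂ) × (Q → ℂ)) :=
  {fg | ∃ h : P → ℂ, (fg.1, h) ∈ KSP ∧ (-h, fg.2) ∈ KPQ}

/-!
Work in `ℂ^{S⊎P⊎Q}` and let `A`, `B` be the cylinders over `V_SP` and `V_PQ`. The matched
composition is the `(S,Q)`-shadow of `A ∩ B`, so `(a,b) ⊥ V_SP ↔ V_PQ` says `(a,0,b) ⊥ A ∩ B`.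
In finite dimension `(A ∩ B)^⊥ = A^⊥ + B^⊥`, and `A^⊥` consists of the vectors `(x,y,0)` with
`(x,y) ⊥ V_SP` (likewise for `B`). Hence `(a,0,b) = (a,h,0) + (0,-h,b)` with `(a,h) ⊥ V_SP` and
`(-h,b) ⊥ V_PQ`. The reverse inclusion is a one-line computation.
-/

open scoped InnerProductSpace

section hinner

variable {X : Type*} [Fintype X]

lemma inner_toLp_eq_hinner (x y : X → ℂ) :
    ⟪WithLp.toLp 2 x, WithLp.toLp 2 y⟫_ℂ = hinner y x := rfl

lemma hinner_neg_right (f g : X → ℂ) : hinner f (-g) = -hinner f g := by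
  simp [hinner]

lemma hinner_zero_left (g : X → ℂ) : hinner 0 g = 0 := by
  simp [hinner]

lemma hinner_zero_right (f : X → ℂ) : hinner f 0 = 0 := by
  simp [hinner]

lemma eq_zero_of_hinner_self_eq_zero {f : X → ℂ} (hf : hinner f f = 0) : f = 0 := by
  rw [← inner_toLp_eq_hinner, inner_self_eq_zero] at hf
  simpa using hf

lemma hinner_sum_split {Y : Type*} [Fintype Y] (u v : X ⊕ Y → ℂ) :
    hinner u v = hinner (u ∘ Sum.inl) (v ∘ Sum.inl) + hinner (u ∘ Sum.inr) (v ∘ Sum.inr) := by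
  simp [hinner, Fintype.sum_sum_type]

end hinner

theorem Submodule.orthogonal_inf {𝕜 E : Type*} [RCLike 𝕜] [NormedAddCommGroup E]
    [InnerProductSpace 𝕜 E] [FiniteDimensional 𝕜 E] (K L : Submodule 𝕜 E) :
    (K ⊓ L)ᗮ = Kᗮ ⊔ Lᗮ := by
  rw [← (Kᗮ ⊔ Lᗮ).orthogonal_orthogonal, ← inf_orthogonal, K.orthogonal_orthogonal,
    L.orthogonal_orthogonal]

theorem exists_add_eq_of_forall_hinner_inf {X : Type*} [Fintype X] {A B : Submodule ℂ (X → ℂ)}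
    {x : X → ℂ} (hx : ∀ u ∈ A ⊓ B, hinner u x = 0) :
    ∃ y z, (∀ u ∈ A, hinner u y = 0) ∧ (∀ u ∈ B, hinner u z = 0) ∧ y + z = x := by
  let e : WithLp 2 (X → ℂ) →ₗ[ℂ] X → ℂ := (WithLp.linearEquiv 2 ℂ (X → ℂ)).toLinearMap
  have hmem : WithLp.toLp 2 x ∈ (A.comap e ⊓ B.comap e)ᗮ :=
    (Submodule.mem_orthogonal' _ _).mpr fun u hu => hx u.ofLp hu
  rw [Submodule.orthogonal_inf] at hmem
  obtain ⟨y, hy, z, hz, hyz⟩ := Submodule.mem_sup.mp hmem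
  refine ⟨y.ofLp, z.ofLp, fun u hu => ?_, fun u hu => ?_, congrArg WithLp.ofLp hyz⟩
  · exact (Submodule.mem_orthogonal' _ _).mp hy (WithLp.toLp 2 u) hu
  · exact (Submodule.mem_orthogonal' _ _).mp hz (WithLp.toLp 2 u) hu

section Composition

variable {S P Q : Type*}

def cylinderSP (Q : Type*) (V : Submodule ℂ ((S → ℂ) × (P → ℂ))) :
    Submodule ℂ (S ⊕ P ⊕ Q → ℂ) :=
  V.comap ((LinearMap.funLeft ℂ ℂ Sum.inl).prod (LinearMap.funLeft ℂ ℂ (Sum.inr ∘ Sum.inl)))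

def cylinderPQ (S : Type*) (V : Submodule ℂ ((P → ℂ) × (Q → ℂ))) :
    Submodule ℂ (S ⊕ P ⊕ Q → ℂ) :=
  V.comap ((LinearMap.funLeft ℂ ℂ (Sum.inr ∘ Sum.inl)).prod
    (LinearMap.funLeft ℂ ℂ (Sum.inr ∘ Sum.inr)))

@[simp]
lemma mem_cylinderSP {V : Submodule ℂ ((S → ℂ) × (P → ℂ))} {u : S ⊕ P ⊕ Q → ℂ} :
    u ∈ cylinderSP Q V ↔ (u ∘ Sum.inl, u ∘ Sum.inr ∘ Sum.inl) ∈ V :=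
  Iff.rfl

@[simp]
lemma mem_cylinderPQ {V : Submodule ℂ ((P → ℂ) × (Q → ℂ))} {u : S ⊕ P ⊕ Q → ℂ} :
    u ∈ cylinderPQ S V ↔ (u ∘ Sum.inr ∘ Sum.inl, u ∘ Sum.inr ∘ Sum.inr) ∈ V :=
  Iff.rfl

variable [Fintype S] [Fintype P] [Fintype Q]

theorem skewed_pperp_subset_pperp_matched (KSP : Set ((S → ℂ) × (P → ℂ)))
    (KPQ : Set ((P → ℂ) × (Q → ℂ))) :
    skewed (pperp KSP) (pperp KPQ) ⊆ pperp (matched KSP KPQ) := by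
  rintro ⟨a, b⟩ ⟨h, hSP, hPQ⟩ ⟨f, g⟩ ⟨k, hk, hk'⟩
  have eSP := hSP (f, k) hk
  have ePQ := hPQ (k, g) hk'
  rw [hinner_neg_right] at ePQ
  linear_combination eSP + ePQ

lemma pperp_of_forall_hinner_cylinderSP {V : Submodule ℂ ((S → ℂ) × (P → ℂ))}
    {y : S ⊕ P ⊕ Q → ℂ} (hy : ∀ u ∈ cylinderSP Q V, hinner u y = 0) :
    (y ∘ Sum.inl, y ∘ Sum.inr ∘ Sum.inl) ∈ pperp (V : Set _) ∧ ∀ q, y (.inr (.inr q)) = 0 := by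
  constructor
  · rintro ⟨f, k⟩ hfk
    simpa [hinner_sum_split, hinner_zero_left, ← Function.comp_assoc]
      using hy (Sum.elim f (Sum.elim k 0)) (by simpa [← Function.comp_assoc] using hfk)
  · refine congrFun (eq_zero_of_hinner_self_eq_zero (f := y ∘ Sum.inr ∘ Sum.inr) ?_)
    simpa [hinner_sum_split, hinner_zero_left, ← Function.comp_assoc]
      using hy (Sum.elim 0 (Sum.elim 0 (y ∘ Sum.inr ∘ Sum.inr)))
        (by simp [← Function.comp_assoc, Prod.mk_zero_zero])

lemma pperp_of_forall_hinner_cylinderPQ {V : Submodule ℂ ((P → ℂ) × (Q → ℂ))}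
    {y : S ⊕ P ⊕ Q → ℂ} (hy : ∀ u ∈ cylinderPQ S V, hinner u y = 0) :
    (y ∘ Sum.inr ∘ Sum.inl, y ∘ Sum.inr ∘ Sum.inr) ∈ pperp (V : Set _) ∧ ∀ s, y (.inl s) = 0 := by
  constructor
  · rintro ⟨k, g⟩ hkg
    simpa [hinner_sum_split, hinner_zero_left, ← Function.comp_assoc]
      using hy (Sum.elim 0 (Sum.elim k g)) (by simpa [← Function.comp_assoc] using hkg)
  · refine congrFun (eq_zero_of_hinner_self_eq_zero (f := y ∘ Sum.inl) ?_)
    simpa [hinner_sum_split, hinner_zero_left, ← Function.comp_assoc]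
      using hy (Sum.elim (y ∘ Sum.inl) 0) (by simp [← Function.comp_assoc, Prod.mk_zero_zero])

theorem pperp_matched_subset_skewed (VSP : Submodule ℂ ((S → ℂ) × (P → ℂ)))
    (VPQ : Submodule ℂ ((P → ℂ) × (Q → ℂ))) :
    pperp (matched (VSP : Set ((S → ℂ) × (P → ℂ))) (VPQ : Set ((P → ℂ) × (Q → ℂ)))) ⊆
      skewed (pperp (VSP : Set ((S → ℂ) × (P → ℂ)))) (pperp (VPQ : Set ((P → ℂ) × (Q → ℂ)))) := by
  rintro ⟨a, b⟩ hab
  obtain ⟨y, z, hy, hz, hyz⟩ :=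
    exists_add_eq_of_forall_hinner_inf (A := cylinderSP Q VSP) (B := cylinderPQ S VPQ)
      (x := Sum.elim a (Sum.elim 0 b)) fun u ⟨huSP, huPQ⟩ => by
        simpa [hinner_sum_split, hinner_zero_right, ← Function.comp_assoc]
          using hab (u ∘ Sum.inl, u ∘ Sum.inr ∘ Sum.inr) ⟨_, huSP, huPQ⟩
  obtain ⟨hySP, hyQ⟩ := pperp_of_forall_hinner_cylinderSP hy
  obtain ⟨hzPQ, hzS⟩ := pperp_of_forall_hinner_cylinderPQ hz
  have ha : y ∘ Sum.inl = a := funext fun s => by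
    simpa [hzS s] using congrFun hyz (.inl s)
  have hb : z ∘ Sum.inr ∘ Sum.inr = b := funext fun q => by
    simpa [hyQ q] using congrFun hyz (.inr (.inr q))
  have hP : z ∘ Sum.inr ∘ Sum.inl = -(y ∘ Sum.inr ∘ Sum.inl) := funext fun p => by
    simpa [eq_neg_iff_add_eq_zero, add_comm] using congrFun hyz (.inr (.inl p))
  exact ⟨y ∘ Sum.inr ∘ Sum.inl, ha ▸ hySP, hP ▸ hb ▸ hzPQ⟩

end Composition

theorem statement4 (S P Q : Type*) [Fintype S] [Fintype P] [Fintype Q]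
    (VSP : Submodule ℂ ((S → ℂ) × (P → ℂ)))
    (VPQ : Submodule ℂ ((P → ℂ) × (Q → ℂ))) :
    pperp (matched (VSP : Set ((S → ℂ) × (P → ℂ))) (VPQ : Set ((P → ℂ) × (Q → ℂ))))
      = skewed (pperp (VSP : Set ((S → ℂ) × (P → ℂ))))
          (pperp (VPQ : Set ((P → ℂ) × (Q → ℂ)))) :=
  (pperp_matched_subset_skewed VSP VPQ).antisymm (skewed_pperp_subset_pperp_matched _ _)
end

section
/- Let S, P be disjoint finite sets, let V_SP ⊆ ℂ^{S⊎P} and V_P ⊆ ℂ^P be ℂ-linear subspaces. Then (V_SP ↔ V_P)^⊥ = V_SP^⊥ ↔ V_P^⊥, where V_SP ↔ V_P := {f_S ∈ ℂ^S : there exists h_P ∈ V_P with (f_S,h_P) ∈ V_SP}, and the orthogonal complement on the left is taken in ℂ^S. -/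
/-- Orthogonal complement (as a set) of a collection of vectors in `ℂ^X`. -/
def perpSet {X : Type*} [Fintype X] (K : Set (X → ℂ)) : Set (X → ℂ) :=
  {g | ∀ f ∈ K, hinner f g = 0}

/-- Matched composition with a collection on the second factor:
`K_SP ↔ K_P := {f_S : ∃ h_P ∈ K_P, (f_S,h_P) ∈ K_SP}`. -/
def matched1 {S P : Type*} (KSP : Set ((S → ℂ) × (P → ℂ))) (KP : Set (P → ℂ)) :
    Set (S → ℂ) :=
  {fS | ∃ h ∈ KP, (fS, h) ∈ KSP}

/-!
View `ℂ^S × ℂ^P` as the Hilbert sum of two Euclidean spaces, so that `perpSet` and `pperp`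
become orthogonal complements. Then `g ⊥ (V_SP ↔ V_P)` says exactly that
`(g, 0) ⊥ V_SP ∩ (ℂ^S × V_P)`. In finite dimension `(U ∩ A)^⊥ = U^⊥ + A^⊥`, and
`(ℂ^S × V_P)^⊥ = 0 × V_P^⊥`, so `(g, 0) = (g, h) + (0, -h)` with `(g, h) ∈ V_SP^⊥` and
`h ∈ V_P^⊥`. The reverse inclusion is immediate.
-/

open scoped InnerProductSpace

namespace Submodule

variable {𝕜 E : Type*} [RCLike 𝕜] [NormedAddCommGroup E] [InnerProductSpace 𝕜 E]

theorem orthogonal_inf_s5 [FiniteDimensional 𝕜 E] (K₁ K₂ : Submodule 𝕜 E) :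
    (K₁ ⊓ K₂)ᗮ = K₁ᗮ ⊔ K₂ᗮ := by
  rw [← orthogonal_orthogonal (K₁ᗮ ⊔ K₂ᗮ), ← inf_orthogonal, orthogonal_orthogonal,
    orthogonal_orthogonal]

end Submodule

namespace WithLp

variable {𝕜 E F : Type*} [RCLike 𝕜] [NormedAddCommGroup E] [InnerProductSpace 𝕜 E]
  [NormedAddCommGroup F] [InnerProductSpace 𝕜 F]

theorem mem_orthogonal_comap_sndₗ_iff (V : Submodule 𝕜 F) (z : WithLp 2 (E × F)) :
    z ∈ (V.comap (sndₗ 2 𝕜 E F))ᗮ ↔ z.fst = 0 ∧ z.snd ∈ Vᗮ := by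
  constructor
  · intro hz
    refine ⟨?_, fun y hy => ?_⟩
    · simpa using hz (toLp 2 (z.fst, 0)) (by simp)
    · simpa using hz (toLp 2 (0, y)) (by simpa using hy)
  · rintro ⟨hz₁, hz₂⟩ x hx
    simpa [hz₁] using hz₂ _ hx

theorem exists_prod_mem_orthogonal [FiniteDimensional 𝕜 E] [FiniteDimensional 𝕜 F]
    (U : Submodule 𝕜 (WithLp 2 (E × F))) (V : Submodule 𝕜 F) (g : E)
    (hg : ∀ x, ∀ y ∈ V, toLp 2 (x, y) ∈ U → ⟪x, g⟫_𝕜 = 0) :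
    ∃ h ∈ Vᗮ, toLp 2 (g, h) ∈ Uᗮ := by
  have hg₀ : toLp 2 (g, 0) ∈ (U ⊓ V.comap (sndₗ 2 𝕜 E F))ᗮ := by
    rintro u ⟨huU, huV⟩
    simpa using hg u.fst u.snd huV huU
  rw [Submodule.orthogonal_inf_s5] at hg₀
  obtain ⟨y, hy, z, hz, hyz⟩ := Submodule.mem_sup.mp hg₀
  rw [mem_orthogonal_comap_sndₗ_iff] at hz
  refine ⟨-z.snd, V.orthogonal.neg_mem hz.2, ?_⟩
  have hy_eq : y = toLp 2 (g, -z.snd) := by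
    rw [eq_sub_of_add_eq hyz]
    refine ofLp_injective 2 (Prod.ext ?_ ?_) <;> simp [hz.1]
  rwa [← hy_eq]

end WithLp

lemma hinner_eq_inner {X : Type*} [Fintype X] (f g : X → ℂ) :
    hinner f g = ⟪WithLp.toLp 2 g, WithLp.toLp 2 f⟫_ℂ := by
  simp [hinner, PiLp.inner_apply]

lemma mem_perpSet_iff {X : Type*} [Fintype X] (K : Submodule ℂ (X → ℂ)) (g : X → ℂ) :
    g ∈ perpSet (K : Set (X → ℂ)) ↔
      WithLp.toLp 2 g ∈ (K.comap (WithLp.linearEquiv 2 ℂ (X → ℂ)).toLinearMap)ᗮ := by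
  simp only [perpSet, Set.mem_ofPred_eq, SetLike.mem_coe, Submodule.mem_orthogonal,
    Submodule.mem_comap]
  refine (WithLp.linearEquiv 2 ℂ (X → ℂ)).symm.toEquiv.forall_congr fun {f} => ?_
  rw [inner_eq_zero_symm]
  simp [hinner_eq_inner]

def euclideanProdEquiv (S P : Type*) :
    WithLp 2 (EuclideanSpace ℂ S × EuclideanSpace ℂ P) ≃ₗ[ℂ] (S → ℂ) × (P → ℂ) :=
  (WithLp.linearEquiv 2 ℂ _).trans
    ((WithLp.linearEquiv 2 ℂ (S → ℂ)).prodCongr (WithLp.linearEquiv 2 ℂ (P → ℂ)))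

lemma mem_pperp_iff {S P : Type*} [Fintype S] [Fintype P]
    (K : Submodule ℂ ((S → ℂ) × (P → ℂ))) (g : (S → ℂ) × (P → ℂ)) :
    g ∈ pperp (K : Set ((S → ℂ) × (P → ℂ))) ↔
      (euclideanProdEquiv S P).symm g ∈ (K.comap (euclideanProdEquiv S P).toLinearMap)ᗮ := by
  simp only [pperp, Set.mem_ofPred_eq, SetLike.mem_coe, Submodule.mem_orthogonal,
    Submodule.mem_comap]
  refine (euclideanProdEquiv S P).symm.toEquiv.forall_congr fun {f} => ?_
  rw [inner_eq_zero_symm]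
  simp [euclideanProdEquiv, hinner_eq_inner]

theorem statement5 (S P : Type*) [Fintype S] [Fintype P]
    (VSP : Submodule ℂ ((S → ℂ) × (P → ℂ))) (VP : Submodule ℂ (P → ℂ)) :
    perpSet (matched1 (VSP : Set ((S → ℂ) × (P → ℂ))) (VP : Set (P → ℂ)))
      = matched1 (pperp (VSP : Set ((S → ℂ) × (P → ℂ))))
          (perpSet (VP : Set (P → ℂ))) := by
  ext g
  constructor
  · intro hg
    obtain ⟨h, hVP, hVSP⟩ := WithLp.exists_prod_mem_orthogonal
      (VSP.comap (euclideanProdEquiv S P).toLinearMap)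
      (VP.comap (WithLp.linearEquiv 2 ℂ (P → ℂ)).toLinearMap) (WithLp.toLp 2 g)
      fun x y hy hxy => by
        rw [← inner_eq_zero_symm, ← hinner_eq_inner]
        exact hg _ ⟨_, hy, hxy⟩
    exact ⟨h.ofLp, (mem_perpSet_iff VP _).2 hVP, (mem_pperp_iff VSP _).2 hVSP⟩
  · rintro ⟨h, hVP, hVSP⟩ f ⟨k, hk, hfk⟩
    simpa [hVP k hk] using hVSP (f, k) hfk
end

section
/- Fix disjoint finite sets S, P and a subspace T of ℂ^{S⊎P}. Let V₁, V₂ ⊆ ℂ^S × ℂ^S be ℂ-linear subspaces that are adjoints of each other, i.e. V₂ = V₁^adj. Then their port behaviours relative to T are adjoints of each other: B(V₂) = (B(V₁))^adj, where on the right the adjoint is taken in ℂ^P × ℂ^P. -/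
/-- Adjoint of a collection of voltage-current pairs:
`K^adj := {(v,i) : (−i,v) ∈ K^⊥}`. -/
def adjSet {X : Type*} [Fintype X] (K : Set ((X → ℂ) × (X → ℂ))) :
    Set ((X → ℂ) × (X → ℂ)) :=
  {w | (-w.2, w.1) ∈ pperp K}

/-- The port behaviour of a device characteristic `K ⊆ ℂ^S × ℂ^S` relative to the
KVL space `T ⊆ ℂ^{S⊎P}` (with KCL space `T^⊥`). -/
def portB {S P : Type*} [Fintype S] [Fintype P]
    (T : Submodule ℂ ((S → ℂ) × (P → ℂ))) (K : Set ((S → ℂ) × (S → ℂ))) :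
    Set ((P → ℂ) × (P → ℂ)) :=
  {w | ∃ (vS iS : S → ℂ) (vP iP : P → ℂ),
      (vS, iS) ∈ K ∧ (vS, vP) ∈ T ∧
      (iS, iP) ∈ pperp (T : Set ((S → ℂ) × (P → ℂ))) ∧ w = (vP, -iP)}

/-!
Pulling the inner product of a Euclidean space back along a linear equivalence makes `pperp` a
genuine orthogonal complement, so `M^⊥⊥ = M` and `(M ⊓ N)^⊥ = M^⊥ ⊔ N^⊥`. The port behaviour
`B(V)` is the image of `V` under the interconnection relation
`R = {((v_S, i_S), (v_P, -i_P)) : (v_S, v_P) ∈ T, (i_S, i_P) ∈ T^⊥}`, i.e. the projection of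
`(V × ⊤) ⊓ R`, hence `B(V)^⊥ = {y : ∃ x ∈ V^⊥, (-x, y) ∈ R^⊥}`. With `ρ (v, i) = (-i, v)` we have
`V^adj = ρ⁻¹(V^⊥)`, and `R^⊥` is the image of `R` under `(x, y) ↦ (-ρ x, ρ y)` because `ρ`
exchanges the roles of `T` and `T^⊥`. Substituting gives `B(V^adj) = ρ⁻¹(B(V)^⊥) = B(V)^adj`.
-/

open scoped InnerProductSpace

namespace Multiport

section PerpAlong

variable {𝕜 E F : Type*} [RCLike 𝕜] [AddCommGroup E] [Module 𝕜 E]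
  [NormedAddCommGroup F] [InnerProductSpace 𝕜 F] (ι : E ≃ₗ[𝕜] F)

def perpAlong (M : Submodule 𝕜 E) : Submodule 𝕜 E :=
  (M.map (ι : E →ₗ[𝕜] F))ᗮ.comap (ι : E →ₗ[𝕜] F)

lemma mem_perpAlong {M : Submodule 𝕜 E} {x : E} :
    x ∈ perpAlong ι M ↔ ∀ m ∈ M, ⟪ι x, ι m⟫_𝕜 = 0 := by
  simp only [perpAlong, Submodule.mem_comap, Submodule.mem_orthogonal', Submodule.mem_map,
    forall_exists_index, and_imp, forall_apply_eq_imp_iff₂, LinearEquiv.coe_coe]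

lemma perpAlong_top : perpAlong ι ⊤ = ⊥ := by
  ext x
  simp only [mem_perpAlong, Submodule.mem_top, true_implies, Submodule.mem_bot]
  exact ⟨fun h => ι.injective (by simpa using inner_self_eq_zero.mp (h x)),
    fun h m => by simp [h]⟩

lemma perpAlong_sup (M N : Submodule 𝕜 E) :
    perpAlong ι (M ⊔ N) = perpAlong ι M ⊓ perpAlong ι N := by
  rw [perpAlong, perpAlong, perpAlong, Submodule.map_sup, ← Submodule.inf_orthogonal,
    Submodule.comap_inf]

variable [FiniteDimensional 𝕜 F]

lemma perpAlong_perpAlong (M : Submodule 𝕜 E) : perpAlong ι (perpAlong ι M) = M := by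
  rw [perpAlong, perpAlong, Submodule.map_comap_eq_of_surjective ι.surjective,
    Submodule.orthogonal_orthogonal]
  exact Submodule.comap_map_eq_of_injective ι.injective M

lemma perpAlong_inf (M N : Submodule 𝕜 E) :
    perpAlong ι (M ⊓ N) = perpAlong ι M ⊔ perpAlong ι N := by
  rw [← perpAlong_perpAlong ι (perpAlong ι M ⊔ perpAlong ι N), perpAlong_sup,
    perpAlong_perpAlong, perpAlong_perpAlong]

end PerpAlong

section Prod

variable {𝕜 E₁ E₂ F₁ F₂ : Type*} [RCLike 𝕜] [AddCommGroup E₁] [Module 𝕜 E₁]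
  [AddCommGroup E₂] [Module 𝕜 E₂] [NormedAddCommGroup F₁] [InnerProductSpace 𝕜 F₁]
  [NormedAddCommGroup F₂] [InnerProductSpace 𝕜 F₂] (ι₁ : E₁ ≃ₗ[𝕜] F₁) (ι₂ : E₂ ≃ₗ[𝕜] F₂)

def prodEquiv : (E₁ × E₂) ≃ₗ[𝕜] WithLp 2 (F₁ × F₂) :=
  (ι₁.prodCongr ι₂).trans (WithLp.linearEquiv 2 𝕜 (F₁ × F₂)).symm

@[simp]
lemma inner_prodEquiv (x y : E₁ × E₂) :
    ⟪prodEquiv ι₁ ι₂ x, prodEquiv ι₁ ι₂ y⟫_𝕜 = ⟪ι₁ x.1, ι₁ y.1⟫_𝕜 + ⟪ι₂ x.2, ι₂ y.2⟫_𝕜 :=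
  rfl

lemma perpAlong_prod (A : Submodule 𝕜 E₁) (B : Submodule 𝕜 E₂) :
    perpAlong (prodEquiv ι₁ ι₂) (A.prod B) = (perpAlong ι₁ A).prod (perpAlong ι₂ B) := by
  ext x
  simp only [Submodule.mem_prod, mem_perpAlong, inner_prodEquiv, Prod.forall]
  refine ⟨fun h => ⟨fun a ha => ?_, fun b hb => ?_⟩, fun ⟨h₁, h₂⟩ a b ⟨ha, hb⟩ => ?_⟩
  · simpa using h a 0 ⟨ha, B.zero_mem⟩
  · simpa using h 0 b ⟨A.zero_mem, hb⟩
  · rw [h₁ a ha, h₂ b hb, add_zero]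

variable [FiniteDimensional 𝕜 F₁] [FiniteDimensional 𝕜 F₂]

lemma zero_mem_perpAlong_prod_top_inf_iff (A : Submodule 𝕜 E₁) (M : Submodule 𝕜 (E₁ × E₂))
    (y : E₂) :
    (0, y) ∈ perpAlong (prodEquiv ι₁ ι₂) (A.prod ⊤ ⊓ M) ↔
      ∃ x ∈ perpAlong ι₁ A, (-x, y) ∈ perpAlong (prodEquiv ι₁ ι₂) M := by
  rw [perpAlong_inf, perpAlong_prod, perpAlong_top, Submodule.mem_sup]
  constructor
  · rintro ⟨⟨x, z⟩, ⟨hx, hz⟩, m, hm, hsum⟩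
    obtain rfl : z = 0 := hz
    refine ⟨x, hx, ?_⟩
    convert hm using 1
    rw [eq_sub_of_add_eq' hsum]
    ext <;> simp
  · rintro ⟨x, hx, hm⟩
    exact ⟨(x, 0), ⟨hx, Submodule.zero_mem _⟩, (-x, y), hm, by simp⟩

end Prod

section PairSpace

noncomputable def pairEquiv (X Y : Type*) [Fintype X] [Fintype Y] :
    ((X → ℂ) × (Y → ℂ)) ≃ₗ[ℂ] WithLp 2 (EuclideanSpace ℂ X × EuclideanSpace ℂ Y) :=
  prodEquiv (WithLp.linearEquiv 2 ℂ (X → ℂ)).symm (WithLp.linearEquiv 2 ℂ (Y → ℂ)).symm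

variable {X Y : Type*} [Fintype X] [Fintype Y]

lemma inner_pairEquiv (x y : (X → ℂ) × (Y → ℂ)) :
    ⟪pairEquiv X Y x, pairEquiv X Y y⟫_ℂ = hinner y.1 x.1 + hinner y.2 x.2 := by
  rw [pairEquiv, inner_prodEquiv]
  simp [hinner, PiLp.inner_apply]

lemma mem_perpAlong_pairEquiv {M : Submodule ℂ ((X → ℂ) × (Y → ℂ))} {x : (X → ℂ) × (Y → ℂ)} :
    x ∈ perpAlong (pairEquiv X Y) M ↔ x ∈ pperp (M : Set ((X → ℂ) × (Y → ℂ))) := by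
  simp only [mem_perpAlong, inner_pairEquiv, pperp, Set.mem_ofPred_eq, SetLike.mem_coe]

end PairSpace

section Network

variable {S P : Type*} [Fintype S] [Fintype P]

def portRelation (T : Submodule ℂ ((S → ℂ) × (P → ℂ))) :
    Submodule ℂ (((S → ℂ) × (S → ℂ)) × ((P → ℂ) × (P → ℂ))) where
  carrier := {x | (x.1.1, x.2.1) ∈ T ∧ (x.1.2, -x.2.2) ∈ perpAlong (pairEquiv S P) T}
  add_mem' hx hy := ⟨T.add_mem hx.1 hy.1, by
    simpa only [Prod.fst_add, Prod.snd_add, neg_add, Prod.mk_add_mk] using add_mem hx.2 hy.2⟩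
  zero_mem' := ⟨T.zero_mem, by
    simpa only [Prod.fst_zero, Prod.snd_zero, neg_zero, Prod.mk_zero_zero] using zero_mem _⟩
  smul_mem' c _ hx := ⟨T.smul_mem c hx.1, by simpa using Submodule.smul_mem _ c hx.2⟩

variable {T : Submodule ℂ ((S → ℂ) × (P → ℂ))}

lemma mem_portRelation {x : ((S → ℂ) × (S → ℂ)) × ((P → ℂ) × (P → ℂ))} :
    x ∈ portRelation T ↔
      (x.1.1, x.2.1) ∈ T ∧ (x.1.2, -x.2.2) ∈ perpAlong (pairEquiv S P) T :=
  Iff.rfl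

lemma mem_portB_iff {K : Set ((S → ℂ) × (S → ℂ))} {w : (P → ℂ) × (P → ℂ)} :
    w ∈ portB T K ↔ ∃ x ∈ K, (x, w) ∈ portRelation T := by
  simp only [portB, Set.mem_ofPred_eq, mem_portRelation, mem_perpAlong_pairEquiv]
  constructor
  · rintro ⟨vS, iS, vP, iP, hK, hv, hi, rfl⟩
    exact ⟨(vS, iS), hK, hv, by simpa using hi⟩
  · rintro ⟨⟨vS, iS⟩, hK, hv, hi⟩
    exact ⟨vS, iS, w.1, -w.2, hK, hv, hi, by simp⟩

lemma inner_eq_inner_voltages_add_inner_currents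
    (x y : ((S → ℂ) × (S → ℂ)) × ((P → ℂ) × (P → ℂ))) :
    ⟪prodEquiv (pairEquiv S S) (pairEquiv P P) x,
        prodEquiv (pairEquiv S S) (pairEquiv P P) y⟫_ℂ =
      ⟪pairEquiv S P (x.1.1, x.2.1), pairEquiv S P (y.1.1, y.2.1)⟫_ℂ +
        ⟪pairEquiv S P (x.1.2, -x.2.2), pairEquiv S P (y.1.2, -y.2.2)⟫_ℂ := by
  simp only [inner_prodEquiv, inner_pairEquiv, hinner, Pi.neg_apply, map_neg, mul_neg, neg_mul,
    neg_neg]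
  ring

lemma mem_perpAlong_portRelation {z : ((S → ℂ) × (S → ℂ)) × ((P → ℂ) × (P → ℂ))} :
    z ∈ perpAlong (prodEquiv (pairEquiv S S) (pairEquiv P P)) (portRelation T) ↔
      (z.1.1, z.2.1) ∈ perpAlong (pairEquiv S P) T ∧ (z.1.2, -z.2.2) ∈ T := by
  simp only [mem_perpAlong, inner_eq_inner_voltages_add_inner_currents]
  constructor
  · intro h
    refine ⟨fun t ht => ?_, ?_⟩
    · have hm : ((t.1, 0), (t.2, 0)) ∈ portRelation T :=
        ⟨ht, by simpa only [neg_zero, Prod.mk_zero_zero] using zero_mem _⟩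
      simpa only [neg_zero, Prod.mk_zero_zero, map_zero, inner_zero_right, add_zero] using h _ hm
    · rw [← perpAlong_perpAlong (pairEquiv S P) T, mem_perpAlong]
      intro u hu
      have hm : ((0, u.1), (0, -u.2)) ∈ portRelation T :=
        ⟨by simpa only [Prod.mk_zero_zero] using zero_mem _, by simpa only [neg_neg] using hu⟩
      simpa only [neg_neg, Prod.mk_zero_zero, map_zero, inner_zero_right, zero_add] using h _ hm
  · rintro ⟨hv, hi⟩ m ⟨hmv, hmi⟩
    rw [mem_perpAlong] at hmi
    rw [hv _ hmv, inner_eq_zero_symm.mp (hmi _ hi), add_zero]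

lemma mem_portRelation_iff_mem_perpAlong {x : (S → ℂ) × (S → ℂ)} {y : (P → ℂ) × (P → ℂ)} :
    (x, y) ∈ portRelation T ↔
      ((x.2, -x.1), (-y.2, y.1)) ∈
        perpAlong (prodEquiv (pairEquiv S S) (pairEquiv P P)) (portRelation T) := by
  rw [mem_perpAlong_portRelation, mem_portRelation, and_comm, ← Prod.neg_mk, neg_mem_iff]

lemma mem_pperp_portB_iff {K : Submodule ℂ ((S → ℂ) × (S → ℂ))} {y : (P → ℂ) × (P → ℂ)} :
    y ∈ pperp (portB T K) ↔
      (0, y) ∈ perpAlong (prodEquiv (pairEquiv S S) (pairEquiv P P))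
        (K.prod ⊤ ⊓ portRelation T) := by
  simp only [pperp, Set.mem_ofPred_eq, mem_perpAlong, inner_prodEquiv, map_zero,
    inner_zero_left, zero_add, inner_pairEquiv, Submodule.mem_inf, Submodule.mem_prod,
    Submodule.mem_top, and_true]
  constructor
  · rintro h m ⟨hK, hm⟩
    exact h _ (mem_portB_iff.mpr ⟨m.1, hK, hm⟩)
  · intro h f hf
    obtain ⟨x, hx, hxf⟩ := mem_portB_iff.mp hf
    exact h (x, f) ⟨hx, hxf⟩

end Network

end Multiport

open Multiport

theorem statement7 (S P : Type*) [Fintype S] [Fintype P]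
    (T : Submodule ℂ ((S → ℂ) × (P → ℂ)))
    (V₁ V₂ : Submodule ℂ ((S → ℂ) × (S → ℂ)))
    (hadj : (V₂ : Set ((S → ℂ) × (S → ℂ))) = adjSet (V₁ : Set ((S → ℂ) × (S → ℂ)))) :
    portB T (V₂ : Set ((S → ℂ) × (S → ℂ)))
      = adjSet (portB T (V₁ : Set ((S → ℂ) × (S → ℂ)))) := by
  have hV₂ (x : (S → ℂ) × (S → ℂ)) : x ∈ V₂ ↔ (-x.2, x.1) ∈ perpAlong (pairEquiv S S) V₁ := by
    rw [← SetLike.mem_coe, hadj, adjSet, Set.mem_ofPred_eq, mem_perpAlong_pairEquiv]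
  ext w
  rw [adjSet, Set.mem_ofPred_eq, mem_pperp_portB_iff, zero_mem_perpAlong_prod_top_inf_iff,
    mem_portB_iff]
  simp only [SetLike.mem_coe, hV₂, mem_portRelation_iff_mem_perpAlong]
  constructor
  · rintro ⟨x, hx, hxw⟩
    exact ⟨_, hx, by simpa using hxw⟩
  · rintro ⟨x, hx, hxw⟩
    exact ⟨(x.2, -x.1), by simpa using hx, by simpa [← Prod.neg_mk] using hxw⟩
end

section
/- Let P be a finite set, let B and Q be m × P complex matrices and s ∈ ℂ^m, and let A := {(v,i) ∈ ℂ^P × ℂ^P : Bv − Qi = s}. A point (v°,i°) ∈ A is a stationary point of the absorbed power function (v,i) ↦ ⟨v,i⟩ + ⟨i,v⟩ = 2·Re⟨v,i⟩ on A, meaning that Re(⟨i°,δv⟩ + ⟨v°,δi⟩) = 0 for every (δv,δi) ∈ ℂ^P × ℂ^P with B·δv − Q·δi = 0, if and only if there exists λ ∈ ℂ^m with v° = −Q*·λ and i° = B*·λ (where Q* and B* denote conjugate transposes). -/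
/-!
With `M = [B | -Q]` and `z = (i°, v°)`, stationarity says that `z` is orthogonal to `ker M`
for the real part of the inner product. Since `ker M` is a complex subspace this is plain
orthogonality, and `(ker M)ᗮ = range Mᴴ` with `Mᴴ λ = (Bᴴ λ, -Qᴴ λ)`.
-/

open Matrix

open RCLike in
theorem Submodule.mem_orthogonal_iff_forall_re_inner_eq_zero {𝕜 E : Type*} [RCLike 𝕜]
    [NormedAddCommGroup E] [InnerProductSpace 𝕜 E] {K : Submodule 𝕜 E} {z : E} :
    z ∈ Kᗮ ↔ ∀ δ ∈ K, re (inner 𝕜 δ z) = 0 := by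
  refine ⟨fun hz δ hδ => by rw [Submodule.inner_right_of_mem_orthogonal hδ hz, map_zero],
    fun h => (Submodule.mem_orthogonal _ _).2 fun δ hδ => ?_⟩
  -- pairing `z` with `⟪δ, z⟫ • δ` gives `‖⟪δ, z⟫‖ ^ 2`
  have := h _ (K.smul_mem (inner 𝕜 δ z) hδ)
  rwa [inner_smul_left, RCLike.conj_mul, ← ofReal_pow, ofReal_re, sq_eq_zero_iff,
    norm_eq_zero] at this

open RCLike in
theorem Matrix.exists_conjTranspose_mulVec_eq_iff {𝕜 m n : Type*} [RCLike 𝕜] [Fintype m]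
    [Fintype n] (M : Matrix m n 𝕜) (z : n → 𝕜) :
    (∃ lam, Mᴴ *ᵥ lam = z) ↔ ∀ x, M *ᵥ x = 0 → re (z ⬝ᵥ star x) = 0 := by
  classical
  have key : ∀ z' : EuclideanSpace 𝕜 n,
      z' ∈ (toEuclideanLin Mᴴ).range ↔ z' ∈ (toEuclideanLin M).kerᗮ := by
    simp [toEuclideanLin_conjTranspose_eq_adjoint, LinearMap.orthogonal_ker]
  rw [(WithLp.ofLp_surjective 2).exists, (WithLp.ofLp_surjective 2).forall]
  simpa [Submodule.mem_orthogonal_iff_forall_re_inner_eq_zero, toLpLin_apply,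
    EuclideanSpace.inner_eq_star_dotProduct] using key (WithLp.toLp 2 z)

theorem statement14_general (P : Type*) [Fintype P] (m : ℕ)
    (B Q : Matrix (Fin m) P ℂ) (v0 i0 : P → ℂ) :
    (∀ δv δi : P → ℂ, B.mulVec δv - Q.mulVec δi = 0 →
        (hinner i0 δv + hinner v0 δi).re = 0) ↔
      ∃ lam : Fin m → ℂ, v0 = -(Qᴴ.mulVec lam) ∧ i0 = Bᴴ.mulVec lam := by
  classical
  have hpair (δv δi : P → ℂ) :
      hinner i0 δv + hinner v0 δi = Sum.elim i0 v0 ⬝ᵥ star (Sum.elim δv δi) := by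
    rw [Function.star_sumElim, sumElim_dotProduct_sumElim]
    rfl
  have hmul (δv δi : P → ℂ) : fromCols B (-Q) *ᵥ Sum.elim δv δi = B *ᵥ δv - Q *ᵥ δi := by
    rw [fromCols_mulVec_sumElim, neg_mulVec, sub_eq_add_neg]
  have hadj (lam : Fin m → ℂ) :
      (fromCols B (-Q))ᴴ *ᵥ lam = Sum.elim (Bᴴ *ᵥ lam) (-(Qᴴ *ᵥ lam)) := by
    rw [conjTranspose_fromCols_eq_fromRows_conjTranspose, fromRows_mulVec, conjTranspose_neg,
      neg_mulVec]
  calc _ ↔ ∀ x, fromCols B (-Q) *ᵥ x = 0 → (Sum.elim i0 v0 ⬝ᵥ star x).re = 0 := by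
        rw [← (Equiv.sumArrowEquivProdArrow P P ℂ).symm.forall_congr_right, Prod.forall]
        simp only [Equiv.sumArrowEquivProdArrow, Equiv.coe_fn_symm_mk, hmul, hpair]
    _ ↔ ∃ lam, (fromCols B (-Q))ᴴ *ᵥ lam = Sum.elim i0 v0 :=
        ((fromCols B (-Q)).exists_conjTranspose_mulVec_eq_iff _).symm
    _ ↔ _ := by simp_rw [hadj, Sum.elim_eq_iff, eq_comm, and_comm]

theorem statement14 (P : Type*) [Fintype P] (m : ℕ)
    (B Q : Matrix (Fin m) P ℂ) (s : Fin m → ℂ) (v0 i0 : P → ℂ)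
    (hmem : B.mulVec v0 - Q.mulVec i0 = s) :
    (∀ δv δi : P → ℂ, B.mulVec δv - Q.mulVec δi = 0 →
        (hinner i0 δv + hinner v0 δi).re = 0) ↔
      ∃ lam : Fin m → ℂ, v0 = -(Qᴴ.mulVec lam) ∧ i0 = Bᴴ.mulVec lam :=
  statement14_general P m B Q v0 i0
end

section
/- Let P be a finite set, let B and Q be m × P complex matrices, s ∈ ℂ^m, and A := {(v,i) ∈ ℂ^P × ℂ^P : Bv − Qi = s}. Suppose (v°,i°) ∈ A satisfies v° = −Q*·λ and i° = B*·λ for some λ ∈ ℂ^m. Then for every (v,i) ∈ A, the absorbed power satisfies the exact decomposition 2·Re⟨v,i⟩ = 2·Re⟨v°,i°⟩ + 2·Re⟨v − v°, i − i°⟩. -/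
open Matrix

lemma hinner_sub_left {X : Type*} [Fintype X] (a b c : X → ℂ) :
    hinner (a - b) c = hinner a c - hinner b c := by
  simp only [hinner, ← Finset.sum_sub_distrib]
  exact Finset.sum_congr rfl fun e _ => by simp [Pi.sub_apply, sub_mul]

lemma hinner_sub_right {X : Type*} [Fintype X] (a b c : X → ℂ) :
    hinner a (b - c) = hinner a b - hinner a c := by
  simp only [hinner, ← Finset.sum_sub_distrib]
  exact Finset.sum_congr rfl fun e _ => by simp [Pi.sub_apply, map_sub, mul_sub]

lemma hinner_neg_right_s15 {X : Type*} [Fintype X] (a b : X → ℂ) :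
    hinner a (-b) = -hinner a b := by
  simp only [hinner, ← Finset.sum_neg_distrib]
  exact Finset.sum_congr rfl fun e _ => by simp [Pi.neg_apply]

lemma hinner_conj_symm {X : Type*} [Fintype X] (a b : X → ℂ) :
    hinner a b = (starRingEnd ℂ) (hinner b a) := by
  simp only [hinner, map_sum, _root_.map_mul, Complex.conj_conj]
  exact Finset.sum_congr rfl fun e _ => by ring

lemma hinner_adjoint {X : Type*} [Fintype X] {m : ℕ}
    (M : Matrix (Fin m) X ℂ) (x : X → ℂ) (l : Fin m → ℂ) :
    hinner x (Mᴴ.mulVec l) = hinner (M.mulVec x) l := by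
  simp only [hinner, mulVec, dotProduct, conjTranspose_apply, map_sum, _root_.map_mul,
    Finset.mul_sum, Finset.sum_mul]
  rw [Finset.sum_comm]
  refine Finset.sum_congr rfl fun j _ => Finset.sum_congr rfl fun e _ => ?_
  have : (starRingEnd ℂ) (star (M j e)) = M j e := Complex.conj_conj _
  rw [this]; ring

theorem statement15 (P : Type*) [Fintype P] (m : ℕ)
    (B Q : Matrix (Fin m) P ℂ) (s : Fin m → ℂ) (v0 i0 : P → ℂ)
    (hmem : B.mulVec v0 - Q.mulVec i0 = s)
    (lam : Fin m → ℂ) (hv0 : v0 = -(Qᴴ.mulVec lam)) (hi0 : i0 = Bᴴ.mulVec lam) :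
    ∀ v i : P → ℂ, B.mulVec v - Q.mulVec i = s →
      2 * (hinner v i).re
        = 2 * (hinner v0 i0).re + 2 * (hinner (v - v0) (i - i0)).re := by
  intro v i hvi
  have hexp : hinner (v - v0) (i - i0)
      = hinner v i - hinner (v - v0) i0 - hinner v0 (i - i0) - hinner v0 i0 := by
    rw [hinner_sub_left, hinner_sub_right, hinner_sub_right, hinner_sub_left]
    ring
  -- first cross term
  have h1 : hinner (v - v0) i0 = hinner (B.mulVec (v - v0)) lam := by
    rw [hi0, hinner_adjoint]
  -- second cross term
  have h2 : hinner v0 (i - i0) = (starRingEnd ℂ) (-(hinner (Q.mulVec (i - i0)) lam)) := by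
    rw [hinner_conj_symm]
    congr 1
    rw [← hinner_adjoint, hv0, hinner_neg_right_s15]
  -- the cross terms cancel in the real part
  have hzero : B.mulVec (v - v0) - Q.mulVec (i - i0) = 0 := by
    rw [mulVec_sub, mulVec_sub]
    have : B.mulVec v - Q.mulVec i = B.mulVec v0 - Q.mulVec i0 := by rw [hvi, hmem]
    funext j
    have := congrFun this j
    simp only [Pi.sub_apply, Pi.zero_apply] at *
    linear_combination this
  have hcrossre : (hinner (v - v0) i0).re + (hinner v0 (i - i0)).re = 0 := by
    rw [h1, h2]
    have : hinner (B.mulVec (v - v0)) lam - hinner (Q.mulVec (i - i0)) lam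
        = hinner (0 : Fin m → ℂ) lam := by
      rw [← hinner_sub_left, hzero]
    have hz : hinner (0 : Fin m → ℂ) lam = 0 := by simp [hinner]
    rw [hz] at this
    have heq : hinner (Q.mulVec (i - i0)) lam = hinner (B.mulVec (v - v0)) lam := by
      linear_combination -this
    rw [heq]
    simp [Complex.conj_re]
  have := congrArg Complex.re hexp
  simp only [Complex.sub_re] at this
  rw [this]
  linarith [hcrossre]
end

section
/- Fix disjoint finite sets S, P and a subspace T of ℂ^{S⊎P}, and assume T×P = {0} and T^⊥×P = {0} (i.e. the only vector of T of the form (0_S, f_P) is zero, and likewise for T^⊥; for the KVL space of a connected multiport graph this holds exactly when the port set P contains no loops and no cutsets). If V ⊆ ℂ^S × ℂ^S is a strictly passive ℂ-linear subspace, then its port behaviour B(V) relative to T is a strictly passive subspace of ℂ^P × ℂ^P. -/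
theorem statement18 (S P : Type*) [Fintype S] [Fintype P]
    (T : Submodule ℂ ((S → ℂ) × (P → ℂ)))
    -- T×P = {0}
    (hTcon : ∀ fP : P → ℂ, ((0 : S → ℂ), fP) ∈ T → fP = 0)
    -- T^⊥×P = {0}
    (hTperpcon : ∀ fP : P → ℂ,
      ((0 : S → ℂ), fP) ∈ pperp (T : Set ((S → ℂ) × (P → ℂ))) → fP = 0)
    (V : Submodule ℂ ((S → ℂ) × (S → ℂ)))
    (hstrict : ∀ p ∈ (V : Set ((S → ℂ) × (S → ℂ))), p ≠ 0 →
      0 < 2 * (hinner p.1 p.2).re) :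
    ∀ w ∈ portB T (V : Set ((S → ℂ) × (S → ℂ))), w ≠ 0 →
      0 < 2 * (hinner w.1 w.2).re := by
  rintro w ⟨vS, iS, vP, iP, hV, hT, hTp, rfl⟩ hw
  have key : hinner vS iS + hinner vP iP = 0 := hTp (vS, vP) hT
  have hneg : hinner vP (-iP) = hinner vS iS := by
    have : hinner vP (-iP) = -hinner vP iP := by
      simp [hinner, Finset.sum_neg_distrib]
    rw [this]; linear_combination -key
  have hne : (vS, iS) ≠ 0 := by
    rintro h
    have hvS : vS = 0 := congrArg Prod.fst h
    have hiS : iS = 0 := congrArg Prod.snd h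
    have hvP : vP = 0 := hTcon vP (hvS ▸ hT)
    have hiP : iP = 0 := hTperpcon iP (by
      intro f hf
      have h2 := hTp f hf
      rw [hiS] at h2
      simpa [hinner] using h2)
    apply hw; simp [hvP, hiP]
  have := hstrict (vS, iS) hV hne
  simpa [hneg] using this
end

section
/- Let P be a finite set and let V be a ℂ-linear subspace of ℂ^P × ℂ^P with dim V = |P|. Then V is strictly passive if and only if there exists a P × P complex matrix Z such that V = {(Z·i, i) : i ∈ ℂ^P} and Z + Z* is positive definite (i.e. Re⟨Z·i + Z*·i, i⟩ > 0 for all nonzero i ∈ ℂ^P, where Z* is the conjugate transpose of Z). -/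
open Matrix

lemma hinner_conj {P : Type*} [Fintype P] (Z : Matrix P P ℂ) (i : P → ℂ) :
    hinner (Zᴴ.mulVec i) i = (starRingEnd ℂ) (hinner (Z.mulVec i) i) := by
  simp only [hinner, mulVec, dotProduct, conjTranspose_apply, map_sum, _root_.map_mul,
    Finset.sum_mul, RingHom.comp_apply, starRingEnd_self_apply]
  rw [Finset.sum_comm]
  congr 1; ext e; congr 1; ext f
  simp [mul_comm, mul_left_comm]

lemma re_sum_conj {P : Type*} [Fintype P] (Z : Matrix P P ℂ) (i : P → ℂ) :
    (hinner (Z.mulVec i + Zᴴ.mulVec i) i).re = 2 * (hinner (Z.mulVec i) i).re := by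
  have hadd : hinner (Z.mulVec i + Zᴴ.mulVec i) i
      = hinner (Z.mulVec i) i + hinner (Zᴴ.mulVec i) i := by
    simp [hinner, add_mul, Finset.sum_add_distrib]
  rw [hadd, hinner_conj]
  simp [Complex.add_re, Complex.conj_re]; ring

theorem statement19 (P : Type*) [Fintype P]
    (V : Submodule ℂ ((P → ℂ) × (P → ℂ)))
    (hdim : Module.finrank ℂ V = Fintype.card P) :
    (∀ p ∈ (V : Set ((P → ℂ) × (P → ℂ))), p ≠ 0 → 0 < 2 * (hinner p.1 p.2).re) ↔
      ∃ Z : Matrix P P ℂ,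
        (V : Set ((P → ℂ) × (P → ℂ))) = {p | ∃ i : P → ℂ, p = (Z.mulVec i, i)} ∧
        ∀ i : P → ℂ, i ≠ 0 → 0 < (hinner (Z.mulVec i + Zᴴ.mulVec i) i).re := by
  classical
  constructor
  · intro hpass
    let π : V →ₗ[ℂ] (P → ℂ) :=
      (LinearMap.snd ℂ (P → ℂ) (P → ℂ)).comp V.subtype
    have hinj : Function.Injective π := by
      rw [← LinearMap.ker_eq_bot, LinearMap.ker_eq_bot']
      intro v hv
      by_contra hne
      have h := hpass v.val v.property (fun h => hne (Subtype.val_injective h))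
      have h2 : (v : (P → ℂ) × (P → ℂ)).2 = 0 := hv
      rw [h2] at h
      simp [hinner] at h
    have hfr : Module.finrank ℂ V = Module.finrank ℂ (P → ℂ) := by
      simp [hdim]
    let e : V ≃ₗ[ℂ] (P → ℂ) := π.linearEquivOfInjective hinj hfr
    have he : ∀ v : V, e v = (v : (P → ℂ) × (P → ℂ)).2 := fun v =>
      π.linearEquivOfInjective_apply hinj hfr v
    let L : (P → ℂ) →ₗ[ℂ] (P → ℂ) :=
      ((LinearMap.fst ℂ (P → ℂ) (P → ℂ)).comp V.subtype).comp (e.symm : (P → ℂ) →ₗ[ℂ] V)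
    -- key: (L i, i) = (e.symm i).val
    have hkey : ∀ i : P → ℂ, ((e.symm i : V) : (P → ℂ) × (P → ℂ)) = (L i, i) := by
      intro i
      have h2 : ((e.symm i : V) : (P → ℂ) × (P → ℂ)).2 = i := by
        rw [← he (e.symm i), e.apply_symm_apply]
      exact Prod.ext rfl h2
    refine ⟨LinearMap.toMatrix' L, ?_, ?_⟩
    · have hmv : ∀ i, (LinearMap.toMatrix' L).mulVec i = L i := by
        intro i
        rw [← Matrix.toLin'_apply, Matrix.toLin'_toMatrix']
      ext p
      constructor
      · intro hp
        refine ⟨p.2, ?_⟩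
        have := hkey p.2
        have hs : e.symm p.2 = ⟨p, hp⟩ := by
          apply e.injective
          rw [e.apply_symm_apply, he]
        rw [hs] at this
        rw [hmv, ← this]
      · rintro ⟨i, rfl⟩
        rw [hmv, ← hkey i]
        exact (e.symm i).property
    · intro i hi
      have hmv : (LinearMap.toMatrix' L).mulVec i = L i := by
        rw [← Matrix.toLin'_apply, Matrix.toLin'_toMatrix']
      rw [re_sum_conj, hmv]
      have hmem := (by rw [← hkey i]; exact (e.symm i).property :
        ((L i, i) : (P → ℂ) × (P → ℂ)) ∈ V)
      have := hpass (L i, i) hmem (by simp [Prod.ext_iff]; intro _; exact hi)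
      simpa using this
  · rintro ⟨Z, hV, hpos⟩
    intro p hp hne
    rw [hV] at hp
    obtain ⟨i, rfl⟩ := hp
    have hi : i ≠ 0 := by
      rintro rfl
      exact hne (by simp)
    have := hpos i hi
    rw [re_sum_conj] at this
    simpa using this
end
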